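/- Let ξ₁, …, ξₙ be i.i.d. Bernoulli(p) random variables with 0 < p < 1, cyclic convention ξ_{n+k} := ξ_k, and V_i := Σ_{m=1}^n (ξ_m ⋯ ξ_{m+i-1} - p^i). Then for all 1 ≤ j ≤ i with n ≥ 2i, E[V_i V_j] = n p^i (1-p) Σ_{k=0}^{j-1} (i - j + 1 + 2k) p^k. -/

import Mathlib

/-!
Expanding the product, `E[V_i V_j]` is a double sum, over pairs of windows `S`, `T`, of the
covariances of `∏_{a ∈ S} ξ_a` and `∏_{a ∈ T} ξ_a`. Since the `ξ_a` are `{0, 1}`-valued, such a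
covariance is `p^|S ∪ T| - p^(|S| + |T|)`, and by rotation invariance it depends only on the
offset `d` of the two windows, through their overlap `c(d)`; hence
`E[V_i V_j] = n ∑_d (p^(i+j-c(d)) - p^(i+j))`.
Writing `p^(i+j-c) - p^(i+j) = p^i (1 - p) ∑_{j-c ≤ k < j} p^k` and exchanging the sums, the
coefficient of `p^k` counts the offsets with `c(d) ≥ j - k`: there are `i - j + 1 + k` of them
without wrap-around and `k` with it.
-/

open MeasureTheory ProbabilityTheory Finset
open Fin.NatCast

lemma ofReal_smul_dirac_add_eq_bernoulliMeasure {X : Type*} [MeasurableSpace X] (x y : X)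
    {p : ℝ} (hp : p ∈ unitInterval) :
    ENNReal.ofReal p • Measure.dirac x + ENNReal.ofReal (1 - p) • Measure.dirac y =
      Ber(x, y, ⟨p, hp⟩) := by
  rw [bernoulliMeasure_def, ENNReal.smul_def, ENNReal.smul_def,
    ENNReal.ofReal_eq_coe_nnreal hp.1, ENNReal.ofReal_eq_coe_nnreal (sub_nonneg.2 hp.2)]
  rfl

section Bernoulli

variable {ι : Type*} [Fintype ι] (p : unitInterval)

lemma ae_pi_bernoulliMeasure_eq_zero_or_one :
    ∀ᵐ ω ∂Measure.pi fun _ : ι => Ber((1 : ℝ), 0, p), ∀ a, ω a = 0 ∨ ω a = 1 := by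
  refine ae_all_iff.2 fun a => measure_mono_null (fun ω hω => ?_)
    (Measure.pi_eval_preimage_null (μ := fun _ : ι => Ber((1 : ℝ), 0, p)) (i := a)
      (s := {0, 1}ᶜ) ?_)
  · simpa using hω
  · simp [bernoulliMeasure_def]

lemma integrable_pi_bernoulliMeasure_prod (S : Finset ι) :
    Integrable (fun ω => ∏ a ∈ S, ω a) (Measure.pi fun _ : ι => Ber((1 : ℝ), 0, p)) := by
  classical
  simpa [Fintype.prod_ite_mem] using Integrable.fintype_prod
    (f := fun a (x : ℝ) => if a ∈ S then x else 1) fun _ => integrable_bernoulliMeasure _ _ _ _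

lemma integral_pi_bernoulliMeasure_prod (S : Finset ι) :
    ∫ ω, ∏ a ∈ S, ω a ∂Measure.pi (fun _ : ι => Ber((1 : ℝ), 0, p)) = (p : ℝ) ^ #S := by
  classical
  simpa [Fintype.prod_ite_mem, apply_ite, integral_bernoulliMeasure] using
    integral_fintype_prod_eq_prod (μ := fun _ : ι => Ber((1 : ℝ), 0, p))
      fun a (x : ℝ) => if a ∈ S then x else 1

lemma prod_mul_prod_ae_eq_prod_union [DecidableEq ι] (S T : Finset ι) :
    (fun ω => (∏ a ∈ S, ω a) * ∏ a ∈ T, ω a)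
      =ᵐ[Measure.pi fun _ : ι => Ber((1 : ℝ), 0, p)] fun ω => ∏ a ∈ S ∪ T, ω a := by
  filter_upwards [ae_pi_bernoulliMeasure_eq_zero_or_one p] with ω hω
  rw [← prod_union_inter]
  by_cases h : ∀ a ∈ S ∩ T, ω a = 1
  · rw [prod_eq_one h, mul_one]
  · push Not at h
    obtain ⟨a, ha, hωa⟩ := h
    have hunion : a ∈ S ∪ T := mem_union_left T (mem_inter.1 ha).1
    rw [prod_eq_zero hunion ((hω a).resolve_right hωa), zero_mul]

lemma centered_prod_mul_ae_eq [DecidableEq ι] (S T : Finset ι) (c d : ℝ) :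
    (fun ω => ((∏ a ∈ S, ω a) - c) * ((∏ a ∈ T, ω a) - d))
      =ᵐ[Measure.pi fun _ : ι => Ber((1 : ℝ), 0, p)]
        fun ω => (∏ a ∈ S ∪ T, ω a) - (d * ∏ a ∈ S, ω a + c * ∏ a ∈ T, ω a) + c * d := by
  filter_upwards [prod_mul_prod_ae_eq_prod_union p S T] with ω hω
  rw [← hω]
  ring

lemma integrable_pi_bernoulliMeasure_centered_prod_mul (S T : Finset ι) (c d : ℝ) :
    Integrable (fun ω => ((∏ a ∈ S, ω a) - c) * ((∏ a ∈ T, ω a) - d))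
      (Measure.pi fun _ : ι => Ber((1 : ℝ), 0, p)) := by
  classical
  refine Integrable.congr ?_ (centered_prod_mul_ae_eq p S T c d).symm
  exact ((integrable_pi_bernoulliMeasure_prod p _).sub
    (((integrable_pi_bernoulliMeasure_prod p _).const_mul _).add
      ((integrable_pi_bernoulliMeasure_prod p _).const_mul _))).add (integrable_const _)

lemma integral_pi_bernoulliMeasure_centered_prod_mul [DecidableEq ι] (S T : Finset ι) :
    ∫ ω, ((∏ a ∈ S, ω a) - (p : ℝ) ^ #S) * ((∏ a ∈ T, ω a) - (p : ℝ) ^ #T)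
        ∂Measure.pi (fun _ : ι => Ber((1 : ℝ), 0, p)) =
      (p : ℝ) ^ #(S ∪ T) - (p : ℝ) ^ (#S + #T) := by
  have hSc := (integrable_pi_bernoulliMeasure_prod p S).const_mul ((p : ℝ) ^ #T)
  have hTc := (integrable_pi_bernoulliMeasure_prod p T).const_mul ((p : ℝ) ^ #S)
  have hU := integrable_pi_bernoulliMeasure_prod p (S ∪ T)
  rw [integral_congr_ae (centered_prod_mul_ae_eq p S T _ _),
    integral_add ?_ (integrable_const _), integral_sub hU ?_, integral_add hSc hTc,
    integral_const_mul, integral_const_mul]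
  · simp only [integral_pi_bernoulliMeasure_prod, integral_const, probReal_univ, one_smul]
    ring
  · exact hSc.add hTc
  · exact hU.sub (hSc.add hTc)

end Bernoulli

/-- The number of common points of the cyclic windows `[0, i)` and `[D, D + j)` of `ℤ/n`: those
before the wrap-around at `n`, plus those after it. -/
def windowOverlap (n i j D : ℕ) : ℕ := min i (D + j) - D + min i (D + j - n)

section WindowOverlap

variable {n i j : ℕ}

lemma windowOverlap_le (hij : i + j ≤ n) {D : ℕ} (hD : D < n) : windowOverlap n i j D ≤ j := by
  unfold windowOverlap
  omega

lemma card_filter_le_add_windowOverlap (hji : j ≤ i) (hij : i + j ≤ n) {k : ℕ} (hk : k < j) :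
    #{D ∈ range n | j ≤ k + windowOverlap n i j D} + j = i + 1 + 2 * k := by
  have hsplit : {D ∈ range n | j ≤ k + windowOverlap n i j D} =
      range (i + 1 + k - j) ∪ Ico (n - k) n := by
    ext D
    rw [mem_filter, windowOverlap]
    simp only [mem_range, mem_union, mem_Ico]
    omega
  rw [hsplit, card_union_of_disjoint, card_range, Nat.card_Ico]
  · omega
  · rw [disjoint_left]
    intro D
    simp only [mem_range, mem_Ico]
    omega

lemma pow_add_sub_sub_pow_add_eq (p : ℝ) (i : ℕ) {c : ℕ} (hc : c ≤ j) :
    p ^ (i + j - c) - p ^ (i + j) =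
      p ^ i * (1 - p) * ∑ k ∈ range j, if j ≤ k + c then p ^ k else 0 := by
  have hIco : {k ∈ range j | j ≤ k + c} = Ico (j - c) j := by
    ext k
    simp only [mem_filter, mem_range, mem_Ico]
    omega
  rw [← sum_filter, hIco, mul_assoc, mul_comm (1 - p), geom_sum_Ico_mul_neg p (Nat.sub_le j c),
    mul_sub, ← pow_add, ← pow_add, Nat.add_sub_assoc hc]

lemma sum_range_pow_sub_windowOverlap (p : ℝ) (hji : j ≤ i) (hij : i + j ≤ n) :
    ∑ D ∈ range n, (p ^ (i + j - windowOverlap n i j D) - p ^ (i + j)) =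
      p ^ i * (1 - p) * ∑ k ∈ range j, ((i : ℝ) - j + 1 + 2 * k) * p ^ k := by
  calc ∑ D ∈ range n, (p ^ (i + j - windowOverlap n i j D) - p ^ (i + j))
      = ∑ D ∈ range n, p ^ i * (1 - p) *
          ∑ k ∈ range j, if j ≤ k + windowOverlap n i j D then p ^ k else 0 :=
        sum_congr rfl fun D hD =>
          pow_add_sub_sub_pow_add_eq p i (windowOverlap_le hij (mem_range.1 hD))
    _ = p ^ i * (1 - p) * ∑ k ∈ range j,
          (#{D ∈ range n | j ≤ k + windowOverlap n i j D} : ℝ) * p ^ k := by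
        rw [← mul_sum, sum_comm]
        simp_rw [← sum_filter, sum_const, nsmul_eq_mul]
    _ = p ^ i * (1 - p) * ∑ k ∈ range j, ((i : ℝ) - j + 1 + 2 * k) * p ^ k := by
        congr 1
        refine sum_congr rfl fun k hk => ?_
        have h : (#{D ∈ range n | j ≤ k + windowOverlap n i j D} : ℝ) + j = i + 1 + 2 * k := by
          exact_mod_cast card_filter_le_add_windowOverlap hji hij (mem_range.1 hk)
        linear_combination p ^ k * h

end WindowOverlap

section CyclicWindow

variable {n : ℕ} [NeZero n]

def cyclicWindow (m : Fin n) (k : ℕ) : Finset (Fin n) :=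
  (range k).image fun l : ℕ => m + (l : Fin n)

lemma injOn_add_natCast (m : Fin n) {k : ℕ} (hk : k ≤ n) :
    Set.InjOn (fun l : ℕ => m + (l : Fin n)) (range k) := by
  intro a ha b hb hab
  have h := congrArg Fin.val (add_left_cancel hab)
  simp only [coe_range, Set.mem_Iio] at ha hb
  rwa [Fin.val_natCast, Fin.val_natCast, Nat.mod_eq_of_lt (by omega),
    Nat.mod_eq_of_lt (by omega)] at h

lemma card_cyclicWindow {k : ℕ} (hk : k ≤ n) (m : Fin n) : #(cyclicWindow m k) = k := by
  rw [cyclicWindow, card_image_of_injOn (injOn_add_natCast m hk), card_range]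

lemma prod_range_eq_prod_cyclicWindow {M : Type*} [CommMonoid M] {k : ℕ} (hk : k ≤ n)
    (m : Fin n) (f : Fin n → M) :
    ∏ l ∈ range k, f (m + l) = ∏ a ∈ cyclicWindow m k, f a :=
  (prod_image (injOn_add_natCast m hk)).symm

lemma mem_cyclicWindow {k : ℕ} (hk : k ≤ n) {m a : Fin n} :
    a ∈ cyclicWindow m k ↔ (a - m).val < k := by
  simp only [cyclicWindow, mem_image, mem_range]
  constructor
  · rintro ⟨l, hl, rfl⟩
    rw [add_sub_cancel_left, Fin.val_natCast, Nat.mod_eq_of_lt (by omega)]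
    exact hl
  · exact fun h => ⟨_, h, by rw [Fin.cast_val_eq_self, add_sub_cancel]⟩

lemma mem_cyclicWindow_iff_val {k : ℕ} (hk : k ≤ n) {m a : Fin n} :
    a ∈ cyclicWindow m k ↔ m.val ≤ a.val ∧ a.val < m.val + k ∨ a.val + n < m.val + k := by
  rw [mem_cyclicWindow hk]
  rcases le_or_gt m a with h | h
  · rw [Fin.coe_sub_iff_le.2 h]
    have := Fin.le_iff_val_le_val.1 h
    omega
  · rw [Fin.coe_sub_iff_lt.2 h]
    have := Fin.lt_def.1 h
    omega

lemma card_cyclicWindow_inter_eq_zero_sub {i j : ℕ} (hi : i ≤ n) (hj : j ≤ n) (m m' : Fin n) :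
    #(cyclicWindow m i ∩ cyclicWindow m' j) = #(cyclicWindow 0 i ∩ cyclicWindow (m' - m) j) := by
  refine card_nbij' (· - m) (· + m) ?_ ?_ ?_ ?_ <;> intro a <;>
    simp [mem_cyclicWindow, hi, hj, sub_sub_eq_add_sub]

lemma card_cyclicWindow_inter {i j : ℕ} (hi : i ≤ n) (hj : j ≤ n) (m m' : Fin n) :
    #(cyclicWindow m i ∩ cyclicWindow m' j) = windowOverlap n i j (m' - m).val := by
  rw [card_cyclicWindow_inter_eq_zero_sub hi hj, ← card_map Fin.valEmbedding]
  set D := (m' - m).val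
  have hDn : D < n := (m' - m).isLt
  have : (cyclicWindow 0 i ∩ cyclicWindow (m' - m) j).map Fin.valEmbedding =
      Ico D (min i (D + j)) ∪ range (min i (D + j - n)) := by
    ext x
    simp only [mem_map, mem_inter, mem_cyclicWindow_iff_val hi, mem_cyclicWindow_iff_val hj,
      Fin.valEmbedding_apply, Fin.val_zero, mem_union, mem_Ico, mem_range]
    constructor
    · rintro ⟨a, ha, rfl⟩
      omega
    · intro hx
      exact ⟨⟨x, by omega⟩, by dsimp only; omega, rfl⟩
  rw [this, card_union_of_disjoint, Nat.card_Ico, card_range, windowOverlap]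
  refine disjoint_left.2 fun x hx₁ hx₂ => ?_
  simp only [mem_Ico, mem_range] at hx₁ hx₂
  omega

lemma card_cyclicWindow_union {i j : ℕ} (hi : i ≤ n) (hj : j ≤ n) (m m' : Fin n) :
    #(cyclicWindow m i ∪ cyclicWindow m' j) = i + j - windowOverlap n i j (m' - m).val := by
  have h := card_union_add_card_inter (cyclicWindow m i) (cyclicWindow m' j)
  rw [card_cyclicWindow hi, card_cyclicWindow hj, card_cyclicWindow_inter hi hj] at h
  omega

end CyclicWindow

lemma Fintype.sum_sum_sub {G M : Type*} [AddGroup G] [Fintype G] [AddCommMonoid M] (f : G → M) :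
    ∑ m, ∑ m', f (m' - m) = Fintype.card G • ∑ d, f d := by
  rw [← card_univ, ← sum_const]
  exact Finset.sum_congr rfl fun m _ => sum_equiv (Equiv.subRight m) _ _ fun _ => rfl

theorem runs_mixed_moment_general
    (n i j : ℕ) [NeZero n] (hji : j ≤ i) (hn : 2 * i ≤ n)
    (p : ℝ) (hp0 : 0 < p) (hp1 : p < 1) :
    ∫ ω : Fin n → ℝ,
        (∑ m : Fin n, ((∏ l ∈ Finset.range i, ω (m + (l : Fin n))) - p ^ i)) *
        (∑ m : Fin n, ((∏ l ∈ Finset.range j, ω (m + (l : Fin n))) - p ^ j))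
      ∂(Measure.pi fun _ : Fin n =>
          ENNReal.ofReal p • Measure.dirac (1 : ℝ) + ENNReal.ofReal (1 - p) • Measure.dirac 0)
    = n * p ^ i * (1 - p) *
        ∑ k ∈ Finset.range j, ((i : ℝ) - (j : ℝ) + 1 + 2 * (k : ℝ)) * p ^ k := by
  have hin : i ≤ n := by omega
  have hjn : j ≤ n := by omega
  have hp : p ∈ unitInterval := ⟨hp0.le, hp1.le⟩
  have hterm (m m' : Fin n) :
      ∫ ω, ((∏ a ∈ cyclicWindow m i, ω a) - p ^ i) * ((∏ a ∈ cyclicWindow m' j, ω a) - p ^ j)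
          ∂Measure.pi (fun _ : Fin n => Ber((1 : ℝ), 0, ⟨p, hp⟩)) =
        p ^ (i + j - windowOverlap n i j (m' - m).val) - p ^ (i + j) := by
    have h := integral_pi_bernoulliMeasure_centered_prod_mul ⟨p, hp⟩ (cyclicWindow m i)
      (cyclicWindow m' j)
    rwa [card_cyclicWindow hin, card_cyclicWindow hjn, card_cyclicWindow_union hin hjn] at h
  rw [ofReal_smul_dirac_add_eq_bernoulliMeasure 1 0 hp]
  simp_rw [prod_range_eq_prod_cyclicWindow hin, prod_range_eq_prod_cyclicWindow hjn, sum_mul_sum]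
  rw [integral_finsetSum _ fun m _ => integrable_finsetSum _ fun m' _ =>
    integrable_pi_bernoulliMeasure_centered_prod_mul _ _ _ _ _]
  simp_rw [integral_finsetSum _ fun m' _ =>
    integrable_pi_bernoulliMeasure_centered_prod_mul _ _ _ _ _, hterm]
  rw [Fintype.sum_sum_sub (fun d : Fin n => p ^ (i + j - windowOverlap n i j d.val) - p ^ (i + j)),
    Fin.sum_univ_eq_sum_range (fun D => p ^ (i + j - windowOverlap n i j D) - p ^ (i + j)),
    sum_range_pow_sub_windowOverlap p hji (by omega), Fintype.card_fin, nsmul_eq_mul]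
  ring

/-- For i.i.d. Bernoulli(p) with cyclic convention and `V_i` the centered number
of i-runs, for `1 ≤ j ≤ i` and `n ≥ 2i`:
`E[V_i V_j] = n p^i (1-p) ∑_{k=0}^{j-1} (i - j + 1 + 2k) p^k`. -/
theorem runs_mixed_moment
    (n i j : ℕ) [NeZero n] (hj : 1 ≤ j) (hji : j ≤ i) (hn : 2 * i ≤ n)
    (p : ℝ) (hp0 : 0 < p) (hp1 : p < 1) :
    ∫ ω : Fin n → ℝ,
        (∑ m : Fin n, ((∏ l ∈ Finset.range i, ω (m + (l : Fin n))) - p ^ i)) *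
        (∑ m : Fin n, ((∏ l ∈ Finset.range j, ω (m + (l : Fin n))) - p ^ j))
      ∂(Measure.pi fun _ : Fin n =>
          ENNReal.ofReal p • Measure.dirac (1 : ℝ) + ENNReal.ofReal (1 - p) • Measure.dirac 0)
    = n * p ^ i * (1 - p) *
        ∑ k ∈ Finset.range j, ((i : ℝ) - (j : ℝ) + 1 + 2 * (k : ℝ)) * p ^ k :=
  runs_mixed_moment_general n i j hji hn p hp0 hp1
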